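/- arXiv:2602.10357 — 2 statements merged into one kernel-verified Lean document; each statement's English description precedes it below -/
import Mathlib

section
/- Let d ≤ d₁ be positive integers, let M be a real d₁ × d matrix with Mᵀ M = I_d, and let Z be a random vector in ℝ^{d₁} with independent N(0,1) coordinates. Then for every ε ∈ (0,1): P( |‖M Mᵀ Z‖₂² − d| ≥ ε d ) ≤ 2·exp(−d ε²/8). -/
/-!
Since `Mᵀ M = 1`, `‖M Mᵀ z‖ = ‖Mᵀ z‖`, and `Mᵀ Z` is again a standard Gaussian vector, in `ℝ^d`:
its characteristic function is `exp (-‖M t‖² / 2) = exp (-‖t‖² / 2)`. Hence `‖M Mᵀ Z‖²` is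
`χ²_d`, whose moment generating function is `(1 - 2t)^(-d/2)`. The Chernoff bound at `t = ε / 4`
for the upper tail and `t = -ε / 2` for the lower tail gives `exp (-d ε² / 8)` for each tail, by
`exp (-(u + u²)) ≤ 1 - u` on `[0, 1/2]` and `exp (x - x² / 2) ≤ 1 + x` on `[0, ∞)`.
-/

open MeasureTheory ProbabilityTheory Matrix Real

lemma Real.exp_neg_add_sq_le_one_sub {u : ℝ} (hu0 : 0 ≤ u) (hu : u ≤ 1 / 2) :
    exp (-(u + u ^ 2)) ≤ 1 - u := by
  have h := quadratic_le_exp_of_nonneg (add_nonneg hu0 (sq_nonneg u))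
  rw [exp_neg, inv_le_iff_one_le_mul₀ (exp_pos _)]
  nlinarith [mul_le_mul_of_nonneg_left h (by linarith : (0 : ℝ) ≤ 1 - u),
    mul_nonneg hu0 hu0, mul_nonneg (mul_nonneg hu0 hu0) hu0]

lemma Real.exp_sub_sq_div_two_le_one_add {x : ℝ} (hx : 0 ≤ x) :
    exp (x - x ^ 2 / 2) ≤ 1 + x := by
  rw [← exp_log (by linarith : 0 < 1 + x), exp_le_exp]
  refine le_trans ?_ (le_log_one_add_of_nonneg hx)
  rw [le_div_iff₀ (by linarith)]
  nlinarith [pow_nonneg hx 3]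

lemma Matrix.sum_sq_mulVec_of_transpose_mul_eq_one {m n : Type*} [Fintype m] [Fintype n]
    [DecidableEq n] {A : Matrix m n ℝ} (hA : Aᵀ * A = 1) (y : n → ℝ) :
    ∑ i, (A *ᵥ y) i ^ 2 = ∑ j, y j ^ 2 := by
  simp only [sq]
  change (A *ᵥ y) ⬝ᵥ (A *ᵥ y) = y ⬝ᵥ y
  rw [dotProduct_mulVec, ← mulVec_transpose, mulVec_mulVec, hA, one_mulVec]

namespace ProbabilityTheory

lemma stdGaussian_map_of_norm_adjoint_eq {E F : Type*} [NormedAddCommGroup E]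
    [InnerProductSpace ℝ E] [FiniteDimensional ℝ E] [MeasurableSpace E] [BorelSpace E]
    [NormedAddCommGroup F] [InnerProductSpace ℝ F] [FiniteDimensional ℝ F]
    [MeasurableSpace F] [BorelSpace F] (L : E →L[ℝ] F)
    (hL : ∀ y, ‖ContinuousLinearMap.adjoint L y‖ = ‖y‖) :
    (stdGaussian E).map L = stdGaussian F := by
  refine Measure.ext_of_charFun (funext fun t => ?_)
  rw [charFun_apply, integral_map (by fun_prop) (by fun_prop)]
  simp_rw [← ContinuousLinearMap.adjoint_inner_right]
  rw [← charFun_apply, charFun_stdGaussian, charFun_stdGaussian, hL]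

lemma stdGaussian_map_ofLp {ι : Type*} [Fintype ι] :
    (stdGaussian (EuclideanSpace ℝ ι)).map WithLp.ofLp =
      Measure.pi fun _ : ι => gaussianReal 0 1 := by
  rw [← map_pi_eq_stdGaussian, Measure.map_map (by fun_prop) (by fun_prop)]
  exact Measure.map_id

lemma pi_gaussianReal_map_mulVec {m n : Type*} [Fintype m] [Fintype n] [DecidableEq m]
    {A : Matrix m n ℝ} (hA : A * Aᵀ = 1) :
    (Measure.pi fun _ : n => gaussianReal 0 1).map (A *ᵥ ·) =
      Measure.pi fun _ : m => gaussianReal 0 1 := by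
  classical
  set L : EuclideanSpace ℝ n →L[ℝ] EuclideanSpace ℝ m :=
    LinearMap.toContinuousLinearMap (toEuclideanLin A)
  have hL : ∀ y, ‖ContinuousLinearMap.adjoint L y‖ = ‖y‖ := fun y => by
    rw [← LinearMap.adjoint_toContinuousLinearMap, ← toEuclideanLin_conjTranspose_eq_adjoint,
      ← sq_eq_sq₀ (norm_nonneg _) (norm_nonneg _), EuclideanSpace.norm_sq_eq,
      EuclideanSpace.norm_sq_eq]
    simp only [LinearMap.coe_toContinuousLinearMap', conjTranspose_eq_transpose_of_trivial,
      Real.norm_eq_abs, sq_abs, ofLp_toLpLin, toLin'_apply]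
    exact sum_sq_mulVec_of_transpose_mul_eq_one (by rwa [transpose_transpose]) _
  rw [← stdGaussian_map_ofLp, ← stdGaussian_map_ofLp, ← stdGaussian_map_of_norm_adjoint_eq L hL,
    Measure.map_map (by fun_prop) (by fun_prop), Measure.map_map (by fun_prop) (by fun_prop)]
  rfl

/-- For `t ≥ 1 / 2` both sides are junk `0`: the integral diverges and `√` of a nonpositive
number is `0`. -/
lemma mgf_sq_gaussianReal (t : ℝ) :
    mgf (fun x => x ^ 2) (gaussianReal 0 1) t = (√(1 - 2 * t))⁻¹ := by
  have hpdf : ∀ x : ℝ, gaussianPDFReal 0 1 x • exp (t * x ^ 2) =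
      (√(2 * π))⁻¹ * exp (-(1 / 2 - t) * x ^ 2) := fun x => by
    simp only [gaussianPDFReal, NNReal.coe_one, mul_one, sub_zero, smul_eq_mul, mul_assoc,
      ← exp_add]
    ring_nf
  rw [mgf, integral_gaussianReal_eq_integral_smul one_ne_zero]
  simp_rw [hpdf]
  rw [integral_const_mul, integral_gaussian, ← sqrt_inv, ← sqrt_mul (by positivity), ← sqrt_inv]
  congr 1
  field_simp

section ChiSquared

variable {ι : Type*} [Fintype ι]

lemma mgf_sum_sq_pi_gaussianReal (t : ℝ) :
    mgf (fun w : ι → ℝ => ∑ i, w i ^ 2) (Measure.pi fun _ => gaussianReal 0 1) t =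
      (√(1 - 2 * t))⁻¹ ^ Fintype.card ι := by
  have hindep : iIndepFun (fun i (w : ι → ℝ) => w i ^ 2) (Measure.pi fun _ => gaussianReal 0 1) :=
    iIndepFun_pi (X := fun _ x => x ^ 2) fun _ => by fun_prop
  have hcoord : ∀ i, mgf (fun w : ι → ℝ => w i ^ 2) (Measure.pi fun _ => gaussianReal 0 1) t =
      (√(1 - 2 * t))⁻¹ := fun i => by
    rw [show (fun w : ι → ℝ => w i ^ 2) = (fun x => x ^ 2) ∘ (fun w => w i) from rfl,
      ← mgf_map (X := fun x : ℝ => x ^ 2) (measurable_pi_apply i).aemeasurable (by fun_prop),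
      (measurePreserving_eval _ i).map_eq, mgf_sq_gaussianReal]
  have := hindep.mgf_sum (fun _ => by fun_prop) Finset.univ (t := t)
  simp_rw [hcoord, Finset.prod_const, Finset.card_univ] at this
  rw [← this]
  congr 1
  ext w
  simp

lemma integrable_exp_mul_sum_sq_pi_gaussianReal {t : ℝ} (ht : t < 1 / 2) :
    Integrable (fun w : ι → ℝ => exp (t * ∑ i, w i ^ 2))
      (Measure.pi fun _ => gaussianReal 0 1) := by
  refine mgf_pos_iff.mp ?_
  rw [mgf_sum_sq_pi_gaussianReal]
  have : 0 < 1 - 2 * t := by linarith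
  positivity

lemma measureReal_sum_sq_ge_le (c : ℝ) {t : ℝ} (ht0 : 0 ≤ t) (ht : t < 1 / 2) :
    (Measure.pi fun _ : ι => gaussianReal 0 1).real
        {w | c * Fintype.card ι ≤ ∑ i, w i ^ 2} ≤
      (exp (-t * c) * (√(1 - 2 * t))⁻¹) ^ Fintype.card ι := by
  refine (measure_ge_le_exp_mul_mgf _ ht0
    (integrable_exp_mul_sum_sq_pi_gaussianReal ht)).trans_eq ?_
  rw [mgf_sum_sq_pi_gaussianReal, mul_pow, ← exp_nat_mul]
  ring_nf

lemma measureReal_sum_sq_le_le (c : ℝ) {t : ℝ} (ht0 : t ≤ 0) :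
    (Measure.pi fun _ : ι => gaussianReal 0 1).real
        {w | ∑ i, w i ^ 2 ≤ c * Fintype.card ι} ≤
      (exp (-t * c) * (√(1 - 2 * t))⁻¹) ^ Fintype.card ι := by
  refine (measure_le_le_exp_mul_mgf _ ht0
    (integrable_exp_mul_sum_sq_pi_gaussianReal (by linarith))).trans_eq ?_
  rw [mgf_sum_sq_pi_gaussianReal, mul_pow, ← exp_nat_mul]
  ring_nf

lemma measureReal_sum_sq_ge_one_add_le {ε : ℝ} (hε0 : 0 ≤ ε) (hε1 : ε ≤ 1) :
    (Measure.pi fun _ : ι => gaussianReal 0 1).real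
        {w | (1 + ε) * Fintype.card ι ≤ ∑ i, w i ^ 2} ≤
      exp (-(Fintype.card ι * ε ^ 2) / 8) := by
  have hbase : exp (-(ε / 4) * (1 + ε)) * (√(1 - 2 * (ε / 4)))⁻¹ ≤ exp (-ε ^ 2 / 8) := by
    have key := exp_neg_add_sq_le_one_sub (u := ε / 2) (by linarith) (by linarith)
    rw [← div_eq_mul_inv, div_le_iff₀ (sqrt_pos.2 (by linarith))]
    calc exp (-(ε / 4) * (1 + ε)) = exp (-ε ^ 2 / 8) * exp (-(ε / 2 + (ε / 2) ^ 2) / 2) := by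
          rw [← exp_add]; ring_nf
      _ ≤ exp (-ε ^ 2 / 8) * √(1 - 2 * (ε / 4)) := by
          rw [exp_half]
          gcongr
          linarith
  calc _ ≤ (exp (-(ε / 4) * (1 + ε)) * (√(1 - 2 * (ε / 4)))⁻¹) ^ Fintype.card ι :=
        measureReal_sum_sq_ge_le _ (by linarith) (by linarith)
    _ ≤ exp (-ε ^ 2 / 8) ^ Fintype.card ι := by gcongr
    _ = exp (-(Fintype.card ι * ε ^ 2) / 8) := by rw [← exp_nat_mul]; ring_nf

lemma measureReal_sum_sq_le_one_sub_le {ε : ℝ} (hε0 : 0 ≤ ε) :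
    (Measure.pi fun _ : ι => gaussianReal 0 1).real
        {w | ∑ i, w i ^ 2 ≤ (1 - ε) * Fintype.card ι} ≤
      exp (-(Fintype.card ι * ε ^ 2) / 8) := by
  have hbase : exp (-(-(ε / 2)) * (1 - ε)) * (√(1 - 2 * (-(ε / 2))))⁻¹ ≤ exp (-ε ^ 2 / 8) := by
    have key := exp_sub_sq_div_two_le_one_add hε0
    rw [← div_eq_mul_inv, div_le_iff₀ (sqrt_pos.2 (by linarith))]
    calc exp (-(-(ε / 2)) * (1 - ε)) ≤ exp (-ε ^ 2 / 8) * exp ((ε - ε ^ 2 / 2) / 2) := by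
          rw [← exp_add, exp_le_exp]; nlinarith
      _ ≤ exp (-ε ^ 2 / 8) * √(1 - 2 * (-(ε / 2))) := by
          rw [exp_half]
          gcongr
          linarith
  calc _ ≤ (exp (-(-(ε / 2)) * (1 - ε)) * (√(1 - 2 * (-(ε / 2))))⁻¹) ^ Fintype.card ι :=
        measureReal_sum_sq_le_le _ (by linarith)
    _ ≤ exp (-ε ^ 2 / 8) ^ Fintype.card ι := by gcongr
    _ = exp (-(Fintype.card ι * ε ^ 2) / 8) := by rw [← exp_nat_mul]; ring_nf

lemma measure_abs_sum_sq_sub_card_ge_le {ε : ℝ} (hε0 : 0 ≤ ε) (hε1 : ε ≤ 1) :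
    (Measure.pi fun _ : ι => gaussianReal 0 1)
        {w | ε * Fintype.card ι ≤ |∑ i, w i ^ 2 - Fintype.card ι|} ≤
      ENNReal.ofReal (2 * exp (-(Fintype.card ι * ε ^ 2) / 8)) := by
  set P := Measure.pi fun _ : ι => gaussianReal 0 1
  have hsplit : {w : ι → ℝ | ε * Fintype.card ι ≤ |∑ i, w i ^ 2 - Fintype.card ι|} ⊆
      {w | (1 + ε) * Fintype.card ι ≤ ∑ i, w i ^ 2} ∪
        {w | ∑ i, w i ^ 2 ≤ (1 - ε) * Fintype.card ι} := fun w hw => by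
    rcases le_abs'.mp (show ε * Fintype.card ι ≤ _ from hw) with h | h
    · exact Or.inr (show ∑ i, w i ^ 2 ≤ _ by linarith)
    · exact Or.inl (show _ ≤ ∑ i, w i ^ 2 by linarith)
  rw [← ofReal_measureReal (measure_ne_top _ _)]
  refine ENNReal.ofReal_le_ofReal ?_
  calc P.real _ ≤ P.real (_ ∪ _) := measureReal_mono hsplit
    _ ≤ P.real _ + P.real _ := measureReal_union_le _ _
    _ ≤ _ := add_le_add (measureReal_sum_sq_ge_one_add_le hε0 hε1)
        (measureReal_sum_sq_le_one_sub_le hε0)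
    _ = _ := by ring

end ChiSquared

end ProbabilityTheory

theorem gaussian_projection_norm_sq_concentration_general
    (d d₁ : ℕ)
    (M : Matrix (Fin d₁) (Fin d) ℝ) (hM : Mᵀ * M = 1)
    (μ : Measure (Fin d₁ → ℝ))
    (hμ : μ = Measure.pi fun _ : Fin d₁ => gaussianReal 0 1)
    (ε : ℝ) (hε : ε ∈ Set.Ioo (0 : ℝ) 1) :
    μ {z : Fin d₁ → ℝ |
        ε * d ≤ |(∑ i, ((M * Mᵀ).mulVec z i) ^ 2) - d|}
      ≤ ENNReal.ofReal (2 * Real.exp (-(d * ε ^ 2) / 8)) := by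
  subst hμ
  have hpre : {z : Fin d₁ → ℝ | ε * d ≤ |(∑ i, ((M * Mᵀ).mulVec z i) ^ 2) - d|} =
      (Mᵀ *ᵥ ·) ⁻¹' {w : Fin d → ℝ | ε * d ≤ |∑ j, w j ^ 2 - d|} := by
    ext z
    simp only [Set.mem_ofPred_eq, Set.mem_preimage, ← mulVec_mulVec,
      sum_sq_mulVec_of_transpose_mul_eq_one hM]
  rw [hpre, ← Measure.map_apply (by fun_prop) (measurableSet_le (by fun_prop) (by fun_prop)),
    pi_gaussianReal_map_mulVec (by rwa [transpose_transpose])]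
  simpa using measure_abs_sum_sq_sub_card_ge_le (ι := Fin d) hε.1.le hε.2.le

/-- Concentration of the squared norm of the projection `M Mᵀ Z` of a standard
Gaussian vector onto the feature subspace (paper's Lemma B.2(b)). -/
theorem gaussian_projection_norm_sq_concentration
    (d d₁ : ℕ) (hd : 0 < d) (hdd : d ≤ d₁)
    (M : Matrix (Fin d₁) (Fin d) ℝ) (hM : Mᵀ * M = 1)
    (μ : Measure (Fin d₁ → ℝ))
    (hμ : μ = Measure.pi fun _ : Fin d₁ => gaussianReal 0 1)
    (ε : ℝ) (hε : ε ∈ Set.Ioo (0 : ℝ) 1) :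
    μ {z : Fin d₁ → ℝ |
        ε * d ≤ |(∑ i, ((M * Mᵀ).mulVec z i) ^ 2) - d|}
      ≤ ENNReal.ofReal (2 * Real.exp (-(d * ε ^ 2) / 8)) :=
  gaussian_projection_norm_sq_concentration_general d d₁ M hM μ hμ ε hε
end

section
/- Let B be a nonempty finite set, g : B → ℝ, s ∈ B, and δ ∈ [0,1] such that |g(x) − g(s)| ≤ δ for every x ∈ B. Then | e^{g(s)} / Σ_{x∈B} e^{g(x)} − 1/|B| | ≤ 2δ/|B|, where |B| denotes the cardinality of B. -/
/-!
Dividing numerator and denominator by `exp (g s)` writes the logit as `1 / ∑ x, exp (g x - g s)`,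
a sum of `|B|` terms in `[exp (-δ), exp δ]`; so the logit lies in `[exp (-δ) / |B|, exp δ / |B|]`.
For `δ ∈ [0, 1]`, `exp (-δ) ≥ 1 - δ` and, by convexity of `exp` on `[0, 1]` and `e < 3`,
`exp δ ≤ 1 + 2δ`.
-/

open Finset Real

theorem Real.exp_le_one_add_two_mul {δ : ℝ} (h0 : 0 ≤ δ) (h1 : δ ≤ 1) :
    exp δ ≤ 1 + 2 * δ := by
  have hchord : exp ((1 - δ) • (0 : ℝ) + δ • 1) ≤ (1 - δ) • exp 0 + δ • exp 1 :=
    convexOn_exp.2 (Set.mem_univ _) (Set.mem_univ _) (by linarith) h0 (by ring)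
  simp only [smul_eq_mul, mul_zero, mul_one, zero_add, exp_zero] at hchord
  nlinarith [exp_one_lt_three]

theorem exp_div_sum_exp_eq_inv_sum_exp_sub {α : Type*} (B : Finset α) (g : α → ℝ) (s : α) :
    exp (g s) / ∑ x ∈ B, exp (g x) = (∑ x ∈ B, exp (g x - g s))⁻¹ := by
  simp only [exp_sub, ← Finset.sum_div, inv_div]

theorem card_mul_exp_neg_le_sum_exp_sub {α : Type*} {B : Finset α} {g : α → ℝ} {s : α}
    {δ : ℝ} (h : ∀ x ∈ B, |g x - g s| ≤ δ) :
    B.card * exp (-δ) ≤ ∑ x ∈ B, exp (g x - g s) := by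
  simpa using B.card_nsmul_le_sum _ _ fun x hx ↦ exp_le_exp.2 (neg_le_of_abs_le (h x hx))

theorem sum_exp_sub_le_card_mul_exp {α : Type*} {B : Finset α} {g : α → ℝ} {s : α}
    {δ : ℝ} (h : ∀ x ∈ B, |g x - g s| ≤ δ) :
    ∑ x ∈ B, exp (g x - g s) ≤ B.card * exp δ := by
  simpa using B.sum_le_card_nsmul _ _ fun x hx ↦ exp_le_exp.2 (le_of_abs_le (h x hx))

theorem exp_div_sum_exp_mem_Icc {α : Type*} {B : Finset α} {g : α → ℝ} {s : α}
    (hs : s ∈ B) {δ : ℝ} (h : ∀ x ∈ B, |g x - g s| ≤ δ) :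
    exp (g s) / ∑ x ∈ B, exp (g x) ∈ Set.Icc (exp (-δ) / B.card) (exp δ / B.card) := by
  have hn : (0 : ℝ) < B.card := by exact_mod_cast card_pos.2 ⟨s, hs⟩
  have hlow := card_mul_exp_neg_le_sum_exp_sub h
  have hhigh := sum_exp_sub_le_card_mul_exp h
  rw [exp_div_sum_exp_eq_inv_sum_exp_sub]
  constructor
  · calc exp (-δ) / B.card = (B.card * exp δ)⁻¹ := by rw [exp_neg, mul_inv_rev, div_eq_mul_inv]
      _ ≤ _ := inv_anti₀ ((mul_pos hn (exp_pos _)).trans_le hlow) hhigh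
  · calc _ ≤ (B.card * exp (-δ))⁻¹ := inv_anti₀ (by positivity) hlow
      _ = exp δ / B.card := by rw [mul_inv_rev, ← exp_neg, neg_neg, div_eq_mul_inv]

theorem softmax_near_uniform_general
    {α : Type*} (B : Finset α)
    (g : α → ℝ) (s : α) (hs : s ∈ B)
    (δ : ℝ) (hδ : δ ∈ Set.Icc (0 : ℝ) 1)
    (h : ∀ x ∈ B, |g x - g s| ≤ δ) :
    |Real.exp (g s) / (∑ x ∈ B, Real.exp (g x)) - 1 / B.card|
      ≤ 2 * δ / B.card := by
  obtain ⟨hlow, hhigh⟩ := exp_div_sum_exp_mem_Icc hs h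
  have hexp_neg : 1 / B.card - 2 * δ / B.card ≤ exp (-δ) / B.card := by
    rw [← sub_div]
    gcongr
    linarith [add_one_le_exp (-δ), hδ.1]
  have hexp : exp δ / B.card ≤ 1 / B.card + 2 * δ / B.card := by
    rw [← add_div]
    gcongr
    exact exp_le_one_add_two_mul hδ.1 hδ.2
  rw [abs_sub_le_iff]
  constructor <;> linarith

/-- Softmax uniformity: when all scores are within `δ` of each other, every
softmax logit is within `2δ/|B|` of the uniform value `1/|B|`
(core of the paper's Lemma H.1). -/
theorem softmax_near_uniform
    {α : Type*} (B : Finset α) (hB : B.Nonempty)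
    (g : α → ℝ) (s : α) (hs : s ∈ B)
    (δ : ℝ) (hδ : δ ∈ Set.Icc (0 : ℝ) 1)
    (h : ∀ x ∈ B, |g x - g s| ≤ δ) :
    |Real.exp (g s) / (∑ x ∈ B, Real.exp (g x)) - 1 / B.card|
      ≤ 2 * δ / B.card :=
  softmax_near_uniform_general B g s hs δ hδ h
end
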